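/- Let q be a prime power with q ≡ 1 (mod 8), let η_8 be a multiplicative character of F_q of order exactly 8, and set η_4 := η_8². Then q⁴ · {}_4F_3(η_4, η_4, η_4, η_4; ε, ε, ε; 1)_q = J(η_8, η_8)⁴ − q · {}_5F_4(η_4, η_4, η_4, η_4, η_8; ε, ε, ε, η_8; 1)*_q, where the first function is Greene's Gaussian hypergeometric function and the second is McCarthy's hypergeometric function. -/
import Mathlib


open Finset

/-- The Jacobi sum `J(A,B) = ∑_{x ∈ F} A(x) B(1-x)` of two multiplicative characters. -/
noncomputable def jacobiSumC {F : Type} [Field F] [Fintype F]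
    (A B : MulChar F ℂ) : ℂ :=
  ∑ x : F, A x * B (1 - x)

/-- McCarthy's finite-field hypergeometric function
`_{m+1}F_m(A_0, …, A_m; B_1, …, B_m; x)*_q`, defined relative to a
nontrivial additive character `ψ` via Gauss sums. -/
noncomputable def mccarthyF {F : Type} [Field F] [Fintype F] (m : ℕ)
    (A : Fin (m + 1) → MulChar F ℂ) (B : Fin m → MulChar F ℂ)
    (ψ : AddChar F ℂ) (x : F) : ℂ :=
  letI : Fintype (MulChar F ℂ) := Fintype.ofFinite _
  (1 / ((Fintype.card F : ℂ) - 1)) *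
    ∑ χ : MulChar F ℂ,
      (∏ i : Fin (m + 1), gaussSum (A i * χ) ψ / gaussSum (A i) ψ) *
      (∏ j : Fin m, gaussSum ((B j)⁻¹ * χ⁻¹) ψ / gaussSum (B j)⁻¹ ψ) *
      gaussSum χ⁻¹ ψ * (χ (-1)) ^ (m + 1) * χ x

/-- Greene's binomial coefficient `(A | B) = B(-1)/q · J(A, B̄)`. -/
noncomputable def greeneBinom {F : Type} [Field F] [Fintype F]
    (A B : MulChar F ℂ) : ℂ :=
  B (-1) / (Fintype.card F : ℂ) * jacobiSumC A B⁻¹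

/-- Greene's Gaussian hypergeometric function
`_{m+1}F_m(A_0, …, A_m; B_1, …, B_m; x)_q`. -/
noncomputable def greeneF {F : Type} [Field F] [Fintype F] (m : ℕ)
    (A : Fin (m + 1) → MulChar F ℂ) (B : Fin m → MulChar F ℂ) (x : F) : ℂ :=
  letI : Fintype (MulChar F ℂ) := Fintype.ofFinite _
  (Fintype.card F : ℂ) / ((Fintype.card F : ℂ) - 1) *
    ∑ χ : MulChar F ℂ,
      greeneBinom (A 0 * χ) χ *
        (∏ j : Fin m, greeneBinom (A j.succ * χ) (B j * χ)) * χ x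

set_option maxHeartbeats 2000000 in
/-- Proposition 5.4: relation between Greene's `₄F₃` and McCarthy's `₅F₄*`. -/
theorem stmt_16 {F : Type} [Field F] [Fintype F]
    (p e : ℕ) (hp : p.Prime) (he : 0 < e) (hcard : Fintype.card F = p ^ e)
    (hq : Fintype.card F % 8 = 1)
    (η₈ : MulChar F ℂ) (hη₈ : orderOf η₈ = 8)
    (η₄ : MulChar F ℂ) (hη₄ : η₄ = η₈ ^ 2)
    (ψ : AddChar F ℂ) (hψ : ψ ≠ 1) :
    (Fintype.card F : ℂ) ^ 4 * greeneF 3 (fun _ => η₄) (fun _ => 1) 1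
      = jacobiSumC η₈ η₈ ^ 4 -
          (Fintype.card F : ℂ) *
            mccarthyF 4 ![η₄, η₄, η₄, η₄, η₈] ![1, 1, 1, η₈] ψ 1 := by
  classical
  letI : Fintype (MulChar F ℂ) := Fintype.ofFinite _
  have hψp : ψ.IsPrimitive := AddChar.IsPrimitive.of_ne_one hψ
  have hq2 : 1 < Fintype.card F := Fintype.one_lt_card
  have hq0 : (Fintype.card F : ℂ) ≠ 0 := Nat.cast_ne_zero.mpr (by omega)
  have hq1 : (Fintype.card F : ℂ) - 1 ≠ 0 := by
    intro h
    have h2 : ((Fintype.card F : ℕ) : ℂ) = ((1 : ℕ) : ℂ) := by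
      rw [sub_eq_zero] at h; exact_mod_cast h
    exact (by omega : Fintype.card F ≠ 1) (Nat.cast_injective h2)
  -- trivial gauss sum
  have hg1 : gaussSum (1 : MulChar F ℂ) ψ = -1 := by
    have h0 : ∀ x : F, (1 : MulChar F ℂ) x * ψ x = ψ x - (if x = 0 then 1 else 0) := by
      intro x
      by_cases hx : x = 0
      · subst hx
        rw [MulChar.map_nonunit _ (by simp), AddChar.map_zero_eq_one]
        simp
      · rw [MulChar.one_apply (isUnit_iff_ne_zero.mpr hx)]
        simp [hx]
    rw [gaussSum]
    simp only [h0, Finset.sum_sub_distrib]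
    rw [AddChar.sum_eq_zero_of_ne_one hψ]
    simp
  have hgne : ∀ χ : MulChar F ℂ, gaussSum χ ψ ≠ 0 := by
    intro χ
    rcases eq_or_ne χ 1 with h | h
    · rw [h, hg1]; norm_num
    · exact gaussSum_ne_zero_of_nontrivial hq0 h hψp
  have hinv : ∀ χ : MulChar F ℂ, χ⁻¹ (-1) = χ (-1) := by
    intro χ; rw [MulChar.inv_apply', inv_neg_one]
  have hgmul : ∀ χ : MulChar F ℂ, χ ≠ 1 →
      gaussSum χ ψ * gaussSum χ⁻¹ ψ = χ (-1) * (Fintype.card F : ℂ) := by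
    intro χ h
    have h1 := gaussSum_mul_gaussSum_eq_card h hψp
    have h2 := mul_gaussSum_inv_eq_gaussSum χ⁻¹ ψ
    rw [← h2, hinv, mul_left_comm, h1]
  have hsq : ∀ χ : MulChar F ℂ, χ (-1) * χ (-1) = 1 := by
    intro χ; rw [← map_mul]; norm_num
  -- character facts
  have h8ne : η₈ ≠ 1 := by
    intro h; rw [h, orderOf_one] at hη₈; omega
  have h4ord : orderOf η₄ = 4 := by
    rw [hη₄, orderOf_pow, hη₈]; norm_num
  have h4ne : η₄ ≠ 1 := by
    intro h; rw [h, orderOf_one] at h4ord; omega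
  have h48 : η₄ * η₈⁻¹ = η₈ := by rw [hη₄]; group
  have h84 : η₈ * η₄⁻¹ = η₈⁻¹ := by rw [hη₄]; group
  have h8i4 : η₈⁻¹ * η₄ = η₈ := by rw [hη₄]; group
  have h4m1 : η₄ (-1) = 1 := by
    rw [hη₄, sq, MulChar.mul_apply, ← map_mul]; norm_num
  have hone_m1 : (1 : MulChar F ℂ) (-1) = 1 := MulChar.one_apply (IsUnit.neg isUnit_one)
  have hjac : ∀ A B : MulChar F ℂ, jacobiSumC A B = jacobiSum A B := fun _ _ => rfl
  have h8ine : η₈⁻¹ ≠ 1 := fun h => h8ne (by rw [← inv_inv η₈, h, inv_one])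
  have h84ne : η₄⁻¹ ≠ η₈⁻¹ := by
    intro h
    have h2 : η₈ = η₄ := by rw [← inv_inv η₈, ← h, inv_inv]
    rw [← h2] at h4ord; rw [hη₈] at h4ord; omega
  have hJ : jacobiSum η₈ η₈ = gaussSum η₈ ψ * gaussSum η₈ ψ / gaussSum η₄ ψ := by
    have h := jacobiSum_eq_gaussSum_mul_gaussSum_div_gaussSum hq0
      (show η₈ * η₈ ≠ 1 by rw [← sq, ← hη₄]; exact h4ne) hψp
    rw [show η₈ * η₈ = η₄ from by rw [hη₄, sq]] at h
    rw [h]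
  have hs' : gaussSum η₈⁻¹ ψ = η₈ (-1) * (Fintype.card F : ℂ) / gaussSum η₈ ψ := by
    rw [eq_div_iff (hgne η₈)]
    linear_combination hgmul η₈ h8ne
  have hd := mul_self_eq_one_iff.mp (hsq η₈)
  unfold greeneF mccarthyF
  simp only [Fin.prod_univ_succ, Fin.prod_univ_zero, Matrix.cons_val_succ, Matrix.cons_val_zero,
    Matrix.cons_val_one, Matrix.head_cons, MulChar.map_one, mul_one, one_mul, inv_one,
    Finset.prod_const, Finset.card_univ, Fintype.card_fin, hg1]
  have hkey : ∀ x : MulChar F ℂ,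
      (Fintype.card F : ℂ) ^ 4 * (greeneBinom (η₄ * x) x * greeneBinom (η₄ * x) x ^ 3)
        + gaussSum (η₄ * x) ψ / gaussSum η₄ ψ *
              (gaussSum (η₄ * x) ψ / gaussSum η₄ ψ *
                (gaussSum (η₄ * x) ψ / gaussSum η₄ ψ *
                  (gaussSum (η₄ * x) ψ / gaussSum η₄ ψ * (gaussSum (η₈ * x) ψ / gaussSum η₈ ψ)))) *
            (gaussSum x⁻¹ ψ / (-1) *
              (gaussSum x⁻¹ ψ / (-1) *
                (gaussSum x⁻¹ ψ / (-1) * (gaussSum (η₈⁻¹ * x⁻¹) ψ / gaussSum η₈⁻¹ ψ)))) *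
          gaussSum x⁻¹ ψ * x (-1) ^ (4 + 1)
      = if x = η₈⁻¹ then
          ((Fintype.card F : ℂ) - 1) / (Fintype.card F : ℂ) * jacobiSumC η₈ η₈ ^ 4 else 0 := by
    intro x
    by_cases hx8 : x = η₈⁻¹
    · subst hx8
      rw [if_pos rfl]
      simp only [greeneBinom, hjac, inv_inv, h48, mul_inv_cancel, inv_mul_cancel, hg1, hinv, hJ, div_neg, div_one]
      have ha := hgne η₄
      have hs0 := hgne η₈
      set a := gaussSum η₄ ψ with hadef
      set s := gaussSum η₈ ψ with hsdef
      clear_value a s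
      rcases hd with hd1 | hd1 <;> simp only [hs', hd1] <;>
        ring_nf <;> field_simp [hq0, ha, hs0] <;> try ring
    · rw [if_neg hx8]
      by_cases hx1 : x = 1
      · subst hx1
        simp only [mul_one, inv_one, hg1, greeneBinom, hjac, hone_m1, one_pow]
        rw [jacobiSum_comm, jacobiSum_one_nontrivial h4ne]
        simp only [div_self (hgne η₄), div_self (hgne η₈), div_self (hgne η₈⁻¹),
          mul_one, one_mul]
        field_simp
        ring
      · by_cases hx4 : x = η₄⁻¹
        · subst hx4
          simp only [greeneBinom, hjac, inv_inv, h84, h8i4, hinv, h4m1, one_pow,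
            mul_inv_cancel, hg1, one_mul, mul_one, div_neg, div_one]
          rw [jacobiSum_one_nontrivial h4ne]
          have ha := hgne η₄
          have hs0 := hgne η₈
          have hs1 := hgne η₈⁻¹
          set a := gaussSum η₄ ψ with hadef
          set s := gaussSum η₈ ψ with hsdef
          set s' := gaussSum η₈⁻¹ ψ with hs'def
          clear_value a s s'
          ring_nf
          field_simp [hq0, ha, hs0, hs1]
          try ring
        · have h4x : η₄ * x ≠ 1 := by
            intro h
            exact hx4 (by rw [(mul_eq_one_iff_eq_inv.mp h : η₄ = x⁻¹), inv_inv])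
          have h8x : η₈ * x ≠ 1 := by
            intro h
            exact hx8 (by rw [(mul_eq_one_iff_eq_inv.mp h : η₈ = x⁻¹), inv_inv])
          have hJx : jacobiSum (η₄ * x) x⁻¹
              = gaussSum (η₄ * x) ψ * gaussSum x⁻¹ ψ / gaussSum η₄ ψ := by
            have h := jacobiSum_eq_gaussSum_mul_gaussSum_div_gaussSum hq0
              (show (η₄ * x) * x⁻¹ ≠ 1 by rw [mul_inv_cancel_right]; exact h4ne) hψp
            rwa [mul_inv_cancel_right] at h
          have hw' : gaussSum (η₈⁻¹ * x⁻¹) ψ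
              = η₈ (-1) * x (-1) * (Fintype.card F : ℂ) / gaussSum (η₈ * x) ψ := by
            rw [eq_div_iff (hgne _)]
            have h2 := hgmul (η₈ * x) h8x
            rw [mul_inv, MulChar.mul_apply] at h2
            linear_combination h2
          have hc := mul_self_eq_one_iff.mp (hsq x)
          simp only [greeneBinom, hjac, hJx, hw', hs', div_neg, div_one]
          have ha := hgne η₄
          have hs0 := hgne η₈
          have hu := hgne (η₄ * x)
          have hw := hgne (η₈ * x)
          have hv := hgne x⁻¹
          set a := gaussSum η₄ ψ with hadef
          set s := gaussSum η₈ ψ with hsdef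
          set u := gaussSum (η₄ * x) ψ with hudef
          set w := gaussSum (η₈ * x) ψ with hwdef
          set v := gaussSum x⁻¹ ψ with hvdef
          clear_value a s u w v
          rcases hd with hd1 | hd1 <;> rcases hc with hc1 | hc1 <;>
            simp only [hd1, hc1] <;>
            ring_nf <;> field_simp [hq0, ha, hs0, hu, hw, hv] <;> try ring
  have hsum : ((Fintype.card F : ℂ) ^ 4 *
        ∑ x : MulChar F ℂ, greeneBinom (η₄ * x) x * greeneBinom (η₄ * x) x ^ 3)
      + ∑ x : MulChar F ℂ,
          gaussSum (η₄ * x) ψ / gaussSum η₄ ψ *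
              (gaussSum (η₄ * x) ψ / gaussSum η₄ ψ *
                (gaussSum (η₄ * x) ψ / gaussSum η₄ ψ *
                  (gaussSum (η₄ * x) ψ / gaussSum η₄ ψ * (gaussSum (η₈ * x) ψ / gaussSum η₈ ψ)))) *
            (gaussSum x⁻¹ ψ / (-1) *
              (gaussSum x⁻¹ ψ / (-1) *
                (gaussSum x⁻¹ ψ / (-1) * (gaussSum (η₈⁻¹ * x⁻¹) ψ / gaussSum η₈⁻¹ ψ)))) *
          gaussSum x⁻¹ ψ * x (-1) ^ (4 + 1)
      = ((Fintype.card F : ℂ) - 1) / (Fintype.card F : ℂ) * jacobiSumC η₈ η₈ ^ 4 := by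
    rw [Finset.mul_sum, ← Finset.sum_add_distrib,
      Finset.sum_congr rfl fun x _ => hkey x]
    simp
  set S₁ := ∑ x : MulChar F ℂ, greeneBinom (η₄ * x) x * greeneBinom (η₄ * x) x ^ 3 with hS₁
  set S₂ := ∑ x : MulChar F ℂ,
          gaussSum (η₄ * x) ψ / gaussSum η₄ ψ *
              (gaussSum (η₄ * x) ψ / gaussSum η₄ ψ *
                (gaussSum (η₄ * x) ψ / gaussSum η₄ ψ *
                  (gaussSum (η₄ * x) ψ / gaussSum η₄ ψ * (gaussSum (η₈ * x) ψ / gaussSum η₈ ψ)))) *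
            (gaussSum x⁻¹ ψ / (-1) *
              (gaussSum x⁻¹ ψ / (-1) *
                (gaussSum x⁻¹ ψ / (-1) * (gaussSum (η₈⁻¹ * x⁻¹) ψ / gaussSum η₈⁻¹ ψ)))) *
          gaussSum x⁻¹ ψ * x (-1) ^ (4 + 1) with hS₂
  field_simp
  field_simp at hsum
  linear_combination hsum
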